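/- arXiv:1410.2924 — 4 statements merged into one kernel-verified Lean document; each statement's English description precedes it below -/
import Mathlib

section
/- Let p be a power vector with all coordinates nonnegative and p_k > 0, and let j ≠ k. Then the second mixed partial derivative ∂²u_k/∂p_j∂p_k evaluated at p is nonnegative if and only if γ_k(p)·p_k ≥ p_a (equivalently, the SINR of FU k is at least p_a/p_k). -/
/-!
The payoff `u_k` depends on `p_j` only through the noise plus interference `d = R + h_{j,k} p_j`
seen by FU `k`, where `R` collects everything else. Hence the mixed partial is `h_{j,k}` times
`∂_d ∂_y (W log (1 + a y / d) / (y + p_a))` at `y = p_k`, `a = h_{k,k}`, and a direct computation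
gives `∂_d ∂_y = W a (a y² - p_a d) / (d (d + a y)² (y + p_a)²)`, whose sign is that of
`a y² - p_a d = d (γ_k y - p_a)`.
-/

open Real Finset

/-- SINR of FU `k`. -/
noncomputable def sinr {K : ℕ} (hff : Fin K → Fin K → ℝ) (h0f N : Fin K → ℝ)
    (p0 : ℝ) (k : Fin K) (p : Fin K → ℝ) : ℝ :=
  hff k k * p k / (N k + h0f k * p0 + ∑ j ∈ Finset.univ.erase k, hff j k * p j)

/-- Net payoff of FU `k`. -/
noncomputable def payoff {K : ℕ} (W pa p0 : ℝ) (hff : Fin K → Fin K → ℝ)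
    (h0f hf0 N lam : Fin K → ℝ) (k : Fin K) (p : Fin K → ℝ) : ℝ :=
  W * Real.log (1 + sinr hff h0f N p0 k p) / (p k + pa) - lam k * hf0 k * p k

open Filter Topology

/-- The payoff `u_k` as a function of the own power `y` and of the noise plus interference `d`
seen by the user, with `a = h_{k,k}` and `μ = λ_k h_{k,0}`. -/
noncomputable def linkPayoff (W pa μ a d y : ℝ) : ℝ :=
  W * log (1 + a * y / d) / (y + pa) - μ * y

noncomputable def linkPayoffDeriv (W pa μ a d y : ℝ) : ℝ :=
  W * a / ((d + a * y) * (y + pa)) - W * log (1 + a * y / d) / (y + pa) ^ 2 - μ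

section LinkPayoff

variable {W pa μ a d y : ℝ}

theorem hasDerivAt_linkPayoff (hd : d ≠ 0) (hday : d + a * y ≠ 0) (hy : y + pa ≠ 0) :
    HasDerivAt (linkPayoff W pa μ a d) (linkPayoffDeriv W pa μ a d y) y := by
  have hlog : HasDerivAt (fun y => log (1 + a * y / d)) (a / d / (1 + a * y / d)) y := by
    refine HasDerivAt.log ?_ (by rw [one_add_div hd]; exact div_ne_zero hday hd)
    simpa using (((hasDerivAt_id y).const_mul a).div_const d).const_add 1
  have h : HasDerivAt (linkPayoff W pa μ a d)
      ((W * (a / d / (1 + a * y / d)) * (y + pa) - W * log (1 + a * y / d) * 1) / (y + pa) ^ 2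
        - μ * 1) y :=
    ((hlog.const_mul W).div ((hasDerivAt_id' y).add_const pa) hy).sub
      ((hasDerivAt_id' y).const_mul μ)
  refine h.congr_deriv ?_
  rw [linkPayoffDeriv, one_add_div hd]
  field_simp

theorem hasDerivAt_linkPayoffDeriv_interference (hd : d ≠ 0) (hday : d + a * y ≠ 0)
    (hy : y + pa ≠ 0) :
    HasDerivAt (fun d => linkPayoffDeriv W pa μ a d y)
      (W * a * (a * y ^ 2 - pa * d) / (d * (d + a * y) ^ 2 * (y + pa) ^ 2)) d := by
  have hlog :
      HasDerivAt (fun d => log (1 + a * y / d)) (-(a * y) / d ^ 2 / (1 + a * y / d)) d := by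
    refine HasDerivAt.log ?_ (by rw [one_add_div hd]; exact div_ne_zero hday hd)
    simpa using ((hasDerivAt_const d (a * y)).div (hasDerivAt_id d) hd).const_add 1
  have hden : HasDerivAt (fun d => (d + a * y) * (y + pa)) (y + pa) d := by
    simpa using ((hasDerivAt_id d).add_const (a * y)).mul_const (y + pa)
  have h : HasDerivAt (fun d => linkPayoffDeriv W pa μ a d y)
      ((0 * ((d + a * y) * (y + pa)) - W * a * (y + pa)) / ((d + a * y) * (y + pa)) ^ 2
        - W * (-(a * y) / d ^ 2 / (1 + a * y / d)) / (y + pa) ^ 2) d :=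
    (((hasDerivAt_const d (W * a)).div hden (mul_ne_zero hday hy)).sub
      ((hlog.const_mul W).div_const ((y + pa) ^ 2))).sub_const μ
  refine h.congr_deriv ?_
  rw [one_add_div hd]
  field_simp
  ring

theorem cross_partial_nonneg_iff {b : ℝ} (hW : 0 < W) (ha : 0 < a) (hb : 0 < b) (hd : 0 < d)
    (hday : d + a * y ≠ 0) (hy : y + pa ≠ 0) :
    0 ≤ W * a * (a * y ^ 2 - pa * d) / (d * (d + a * y) ^ 2 * (y + pa) ^ 2) * b ↔
      pa ≤ a * y / d * y := by
  have hden : 0 < d * (d + a * y) ^ 2 * (y + pa) ^ 2 := by positivity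
  rw [mul_nonneg_iff_of_pos_right hb, le_div_iff₀ hden, zero_mul,
    mul_nonneg_iff_of_pos_left (mul_pos hW ha), sub_nonneg, div_mul_eq_mul_div, le_div_iff₀ hd,
    mul_assoc, ← sq]

end LinkPayoff

noncomputable def interferenceExcept {K : ℕ} (hff : Fin K → Fin K → ℝ) (h0f N : Fin K → ℝ)
    (p0 : ℝ) (k j : Fin K) (p : Fin K → ℝ) : ℝ :=
  N k + h0f k * p0 + ∑ i ∈ (univ.erase k).erase j, hff i k * p i

section Interference

variable {K : ℕ} (hff : Fin K → Fin K → ℝ) (h0f N : Fin K → ℝ) (p0 : ℝ) {k j : Fin K}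

theorem sinr_update_update (hjk : j ≠ k) (p : Fin K → ℝ) (x y : ℝ) :
    sinr hff h0f N p0 k (Function.update (Function.update p j x) k y) =
      hff k k * y / (interferenceExcept hff h0f N p0 k j p + hff j k * x) := by
  have hj : j ∈ univ.erase k := mem_erase.mpr ⟨hjk, mem_univ j⟩
  rw [sinr, ← add_sum_erase _ _ hj, interferenceExcept]
  simp only [Function.update_self, Function.update_of_ne hjk]
  congr 1
  rw [add_comm (hff j k * x), ← add_assoc]
  congr 2
  refine sum_congr rfl fun i hi => ?_
  obtain ⟨hij, hik, -⟩ := by simpa only [mem_erase] using hi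
  rw [Function.update_of_ne hik, Function.update_of_ne hij]

theorem sinr_eq_div_interferenceExcept (hjk : j ≠ k) (p : Fin K → ℝ) :
    sinr hff h0f N p0 k p =
      hff k k * p k / (interferenceExcept hff h0f N p0 k j p + hff j k * p j) := by
  simpa using sinr_update_update hff h0f N p0 hjk p (p j) (p k)

theorem payoff_update_update (W pa : ℝ) (hf0 lam : Fin K → ℝ) (hjk : j ≠ k) (p : Fin K → ℝ)
    (x y : ℝ) :
    payoff W pa p0 hff h0f hf0 N lam k (Function.update (Function.update p j x) k y) =
      linkPayoff W pa (lam k * hf0 k) (hff k k)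
        (interferenceExcept hff h0f N p0 k j p + hff j k * x) y := by
  rw [payoff, sinr_update_update hff h0f N p0 hjk, linkPayoff, Function.update_self]

theorem interferenceExcept_pos (hN : 0 < N k) (hh0f : 0 ≤ h0f k) (hp0 : 0 ≤ p0)
    (hff_nonneg : ∀ i, 0 ≤ hff i k) (p : Fin K → ℝ) (hp : ∀ i, 0 ≤ p i) :
    0 < interferenceExcept hff h0f N p0 k j p := by
  have := sum_nonneg fun i (_ : i ∈ (univ.erase k).erase j) => mul_nonneg (hff_nonneg i) (hp i)
  have := mul_nonneg hh0f hp0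
  unfold interferenceExcept
  linarith

end Interference

theorem mixed_partial_nonneg_iff_general {K : ℕ}
    (W pa p0 : ℝ) (hW : 0 < W) (hpa : 0 < pa) (hp0 : 0 ≤ p0)
    (hff : Fin K → Fin K → ℝ) (h0f hf0 N lam : Fin K → ℝ)
    (hhff : ∀ i j, 0 < hff i j) (hh0f : ∀ i, 0 < h0f i)
    (hN : ∀ i, 0 < N i)
    (k j : Fin K) (hjk : j ≠ k)
    (p : Fin K → ℝ) (hp : ∀ i, 0 ≤ p i) (hpk : 0 < p k) :
    0 ≤ deriv (fun x => deriv
        (fun y => payoff W pa p0 hff h0f hf0 N lam k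
          (Function.update (Function.update p j x) k y)) (p k)) (p j) ↔
      pa ≤ sinr hff h0f N p0 k p * p k := by
  set R := interferenceExcept hff h0f N p0 k j p
  have hR : 0 < R :=
    interferenceExcept_pos hff h0f N p0 (hN k) (hh0f k).le hp0 (fun i => (hhff i k).le) p hp
  have hapk : 0 < hff k k * p k := mul_pos (hhff k k) hpk
  have hd : 0 < R + hff j k * p j := by have := mul_nonneg (hhff j k).le (hp j); linarith
  have hpartial : (fun x => deriv (fun y => payoff W pa p0 hff h0f hf0 N lam k
        (Function.update (Function.update p j x) k y)) (p k)) =ᶠ[𝓝 (p j)]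
      fun x => linkPayoffDeriv W pa (lam k * hf0 k) (hff k k) (R + hff j k * x) (p k) := by
    have hcont : ContinuousAt (fun x => R + hff j k * x) (p j) := by fun_prop
    filter_upwards [continuousAt_const.eventually_lt hcont hd] with x hx
    simp only [payoff_update_update hff h0f N p0 W pa hf0 lam hjk]
    exact (hasDerivAt_linkPayoff hx.ne' (by linarith) (by linarith)).deriv
  have hinner : HasDerivAt (fun x => R + hff j k * x) (hff j k) (p j) := by
    simpa using ((hasDerivAt_id (p j)).const_mul (hff j k)).const_add R
  have houter := hasDerivAt_linkPayoffDeriv_interference (W := W) (μ := lam k * hf0 k)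
    hd.ne' (by linarith : R + hff j k * p j + hff k k * p k ≠ 0) (by linarith : p k + pa ≠ 0)
  have hmixed : HasDerivAt
      (fun x => linkPayoffDeriv W pa (lam k * hf0 k) (hff k k) (R + hff j k * x) (p k)) _ (p j) :=
    HasDerivAt.comp (h₂ := fun d => linkPayoffDeriv W pa (lam k * hf0 k) (hff k k) d (p k))
      (p j) houter hinner
  rw [hpartial.deriv_eq, hmixed.deriv, sinr_eq_div_interferenceExcept hff h0f N p0 hjk]
  exact cross_partial_nonneg_iff hW (hhff k k) (hhff j k) hd (by linarith) (by linarith)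

/-- The mixed second partial derivative `∂²u_k/∂p_j∂p_k` at `p` is nonnegative
iff `γ_k(p)·p_k ≥ p_a`. -/
theorem mixed_partial_nonneg_iff {K : ℕ} (hK : 1 ≤ K)
    (W pa p0 : ℝ) (hW : 0 < W) (hpa : 0 < pa) (hp0 : 0 ≤ p0)
    (hff : Fin K → Fin K → ℝ) (h0f hf0 N lam pmax : Fin K → ℝ)
    (hhff : ∀ i j, 0 < hff i j) (hh0f : ∀ i, 0 < h0f i) (hhf0 : ∀ i, 0 < hf0 i)
    (hN : ∀ i, 0 < N i) (hlam : ∀ i, 0 ≤ lam i) (hpmax : ∀ i, 0 < pmax i)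
    (k j : Fin K) (hjk : j ≠ k)
    (p : Fin K → ℝ) (hp : ∀ i, 0 ≤ p i) (hpk : 0 < p k) :
    0 ≤ deriv (fun x => deriv
        (fun y => payoff W pa p0 hff h0f hf0 N lam k
          (Function.update (Function.update p j x) k y)) (p k)) (p j) ↔
      pa ≤ sinr hff h0f N p0 k p * p k :=
  mixed_partial_nonneg_iff_general W pa p0 hW hpa hp0 hff h0f hf0 N lam hhff hh0f hN k j hjk p hp
    hpk
end

section
/- Fix an FU k and an opponent power vector p_{-k} with nonnegative entries. If the price satisfies λ_k·h_{k,0} ≥ W·G_k(p_{-k})/p_a, then u_k(p_k, p_{-k}) < 0 = u_k(0, p_{-k}) for every p_k ∈ (0, p_k^max]; in particular p_k = 0 is the unique maximizer of u_k(·, p_{-k}) on [0, p_k^max], i.e., a sufficiently highly priced FU is forced out of the game. -/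
open Real Finset

/-- `G_k(p_{-k}) = h_{k,k}/(N_k + h_{0,k} p_0 + Σ_{j≠k} h_{j,k} p_j)`. -/
noncomputable def Gk {K : ℕ} (hff : Fin K → Fin K → ℝ) (h0f N : Fin K → ℝ)
    (p0 : ℝ) (k : Fin K) (p : Fin K → ℝ) : ℝ :=
  hff k k / (N k + h0f k * p0 + ∑ j ∈ Finset.univ.erase k, hff j k * p j)

/-!
Only `p_k` changes, so `γ_k = G·p_k` with `G = G_k(p_{-k}) > 0`. By `log (1 + t) ≤ t` and
`p_k + p_a > p_a`, the rate term is below `W G p_k / p_a ≤ λ_k h_{k,0} p_k`, the price paid.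
-/

theorem sinr_update_self {K : ℕ} (hff : Fin K → Fin K → ℝ) (h0f N : Fin K → ℝ) (p0 : ℝ)
    (k : Fin K) (p : Fin K → ℝ) (x : ℝ) :
    sinr hff h0f N p0 k (Function.update p k x) = Gk hff h0f N p0 k p * x := by
  have hsum : ∑ j ∈ univ.erase k, hff j k * Function.update p k x j
      = ∑ j ∈ univ.erase k, hff j k * p j :=
    sum_congr rfl fun j hj => by rw [Function.update_of_ne (ne_of_mem_erase hj)]
  rw [sinr, Gk, hsum, Function.update_self, div_mul_eq_mul_div]

theorem payoff_update_self {K : ℕ} (W pa p0 : ℝ) (hff : Fin K → Fin K → ℝ)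
    (h0f hf0 N lam : Fin K → ℝ) (k : Fin K) (p : Fin K → ℝ) (x : ℝ) :
    payoff W pa p0 hff h0f hf0 N lam k (Function.update p k x)
      = W * log (1 + Gk hff h0f N p0 k p * x) / (x + pa) - lam k * hf0 k * x := by
  rw [payoff, sinr_update_self, Function.update_self]

theorem Gk_pos {K : ℕ} {hff : Fin K → Fin K → ℝ} {h0f N : Fin K → ℝ} {p0 : ℝ} {k : Fin K}
    {p : Fin K → ℝ} (hkk : 0 < hff k k) (hN : 0 < N k) (hh0f : 0 ≤ h0f k) (hp0 : 0 ≤ p0)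
    (hinterf : ∀ j ≠ k, 0 ≤ hff j k * p j) :
    0 < Gk hff h0f N p0 k p := by
  have hsum : 0 ≤ ∑ j ∈ univ.erase k, hff j k * p j :=
    sum_nonneg fun j hj => hinterf j (ne_of_mem_erase hj)
  have hD : 0 < N k + h0f k * p0 + ∑ j ∈ univ.erase k, hff j k * p j := by positivity
  exact div_pos hkk hD

theorem mul_log_one_add_mul_div_lt {W G pa c x : ℝ} (hW : 0 < W) (hG : 0 < G) (hpa : 0 < pa)
    (hx : 0 < x) (hc : W * G / pa ≤ c) :
    W * log (1 + G * x) / (x + pa) < c * x := by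
  have hGx : 0 < G * x := mul_pos hG hx
  calc W * log (1 + G * x) / (x + pa)
      ≤ W * (G * x) / (x + pa) := by
        gcongr
        linarith [log_le_sub_one_of_pos (by linarith : 0 < 1 + G * x)]
    _ < W * (G * x) / pa := div_lt_div_of_pos_left (by positivity) hpa (by linarith)
    _ = W * G / pa * x := by ring
    _ ≤ c * x := by gcongr

theorem highPrice_forces_out_general {K : ℕ}
    (W pa p0 : ℝ) (hW : 0 < W) (hpa : 0 < pa) (hp0 : 0 ≤ p0)
    (hff : Fin K → Fin K → ℝ) (h0f hf0 N lam pmax : Fin K → ℝ)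
    (hhff : ∀ i j, 0 < hff i j) (hh0f : ∀ i, 0 < h0f i)
    (hN : ∀ i, 0 < N i) (hpmax : ∀ i, 0 < pmax i)
    (k : Fin K) (p : Fin K → ℝ) (hp : ∀ i, i ≠ k → 0 ≤ p i)
    (hprice : lam k * hf0 k ≥ W * Gk hff h0f N p0 k p / pa) :
    (∀ x ∈ Set.Ioc (0:ℝ) (pmax k),
      payoff W pa p0 hff h0f hf0 N lam k (Function.update p k x) < 0) ∧
    payoff W pa p0 hff h0f hf0 N lam k (Function.update p k 0) = 0 ∧
    (∀ x ∈ Set.Icc (0:ℝ) (pmax k),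
      (∀ y ∈ Set.Icc (0:ℝ) (pmax k),
        payoff W pa p0 hff h0f hf0 N lam k (Function.update p k y) ≤
          payoff W pa p0 hff h0f hf0 N lam k (Function.update p k x)) → x = 0) := by
  have hG : 0 < Gk hff h0f N p0 k p :=
    Gk_pos (hhff k k) (hN k) (hh0f k).le hp0 fun j hj => mul_nonneg (hhff j k).le (hp j hj)
  have hneg : ∀ x ∈ Set.Ioc (0:ℝ) (pmax k),
      payoff W pa p0 hff h0f hf0 N lam k (Function.update p k x) < 0 := fun x hx => by
    rw [payoff_update_self, sub_neg]
    exact mul_log_one_add_mul_div_lt hW hG hpa hx.1 hprice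
  have hzero : payoff W pa p0 hff h0f hf0 N lam k (Function.update p k 0) = 0 := by
    simp [payoff_update_self]
  refine ⟨hneg, hzero, fun x hx hmax => ?_⟩
  by_contra hx0
  have hle := hmax 0 ⟨le_rfl, (hpmax k).le⟩
  linarith [hneg x ⟨lt_of_le_of_ne hx.1 (Ne.symm hx0), hx.2⟩]

/-- If `λ_k·h_{k,0} ≥ W·G_k(p_{-k})/p_a` then `u_k(p_k, p_{-k}) < 0 = u_k(0, p_{-k})`
for every `p_k ∈ (0, p_k^max]`; in particular `p_k = 0` is the unique maximizer:
a sufficiently highly priced FU is forced out of the game. -/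
theorem highPrice_forces_out {K : ℕ} (hK : 1 ≤ K)
    (W pa p0 : ℝ) (hW : 0 < W) (hpa : 0 < pa) (hp0 : 0 ≤ p0)
    (hff : Fin K → Fin K → ℝ) (h0f hf0 N lam pmax : Fin K → ℝ)
    (hhff : ∀ i j, 0 < hff i j) (hh0f : ∀ i, 0 < h0f i) (hhf0 : ∀ i, 0 < hf0 i)
    (hN : ∀ i, 0 < N i) (hlam : ∀ i, 0 ≤ lam i) (hpmax : ∀ i, 0 < pmax i)
    (k : Fin K) (p : Fin K → ℝ) (hp : ∀ i, i ≠ k → 0 ≤ p i)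
    (hprice : lam k * hf0 k ≥ W * Gk hff h0f N p0 k p / pa) :
    (∀ x ∈ Set.Ioc (0:ℝ) (pmax k),
      payoff W pa p0 hff h0f hf0 N lam k (Function.update p k x) < 0) ∧
    payoff W pa p0 hff h0f hf0 N lam k (Function.update p k 0) = 0 ∧
    (∀ x ∈ Set.Icc (0:ℝ) (pmax k),
      (∀ y ∈ Set.Icc (0:ℝ) (pmax k),
        payoff W pa p0 hff h0f hf0 N lam k (Function.update p k y) ≤
          payoff W pa p0 hff h0f hf0 N lam k (Function.update p k x)) → x = 0) :=
  highPrice_forces_out_general W pa p0 hW hpa hp0 hff h0f hf0 N lam pmax hhff hh0f hN hpmax k p hp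
    hprice
end

section
/- Fix an FU k, an opponent power vector p_{-k} with nonnegative entries, and a scalar α > 1. Assume that for every opponent vector q_{-k} with p_{-k} ≤ q_{-k} ≤ α·p_{-k} componentwise, the best response b = p̂_k(q_{-k}) satisfies h_{k,k}·b² ≥ p_a·(N_k + h_{0,k}·p_0 + h_{k,k}·b + Σ_{j≠k} h_{j,k}·q_j), and assume p̂_k(p_{-k}) > 0. Then the best response is scalable: α·p̂_k(p_{-k}) > p̂_k(α·p_{-k}). -/
open Real Finset

/-- `x` is a best response of FU `k` to the opponents' powers in `q`. -/
def IsBestResponse {K : ℕ} (W pa p0 : ℝ) (hff : Fin K → Fin K → ℝ)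
    (h0f hf0 N lam pmax : Fin K → ℝ) (k : Fin K) (q : Fin K → ℝ) (x : ℝ) : Prop :=
  x ∈ Set.Icc (0:ℝ) (pmax k) ∧
    ∀ y ∈ Set.Icc (0:ℝ) (pmax k),
      payoff W pa p0 hff h0f hf0 N lam k (Function.update q k y) ≤
        payoff W pa p0 hff h0f hf0 N lam k (Function.update q k x)

/-!
Let `t` and `t'` be the interference-plus-noise FU `k` sees at `p_{-k}` and at `α p_{-k}`, so that
`t ≤ t' ≤ α t`. As a function of its own power `x`, FU `k`'s payoff has derivative
`W φ(s, x)/(x + pa)² - c`, where `s` is its interference-plus-noise, `c = λ_k h_{k,0}` and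
`φ(s, x) = h(x + pa)/(s + h x) - log(1 + h x / s)`. If `b' ≥ α b`, then `b < b' ≤ pmax`, so `b` is an
interior maximiser and `W φ(t, b) = c (b + pa)²`, while `b'` is a maximiser approached from the left,
so `W φ(t', b') ≥ c (b' + pa)² ≥ c (b + pa)²`. But `φ` decreases in `x`, increases in `s` while
`s pa ≤ h x²` (the hypothesis at `q = p_{-k}` gives `t pa ≤ h b²`), and `φ(α s, α x) < φ(s, x)`, so
`φ(t', b') ≤ φ(t', α b) ≤ φ(α t, α b) < φ(t, b)`, a contradiction.
-/

open Set

theorem IsMaxOn.hasDerivAt_nonneg_of_Icc {f : ℝ → ℝ} {f' a b : ℝ}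
    (h : IsMaxOn f (Icc a b) b) (hab : a < b) (hf : HasDerivAt f f' b) : 0 ≤ f' := by
  have hcone : a - b ∈ posTangentConeAt (Icc a b) b :=
    mem_posTangentConeAt_of_segment_subset <| by
      rw [add_sub_cancel, segment_symm, segment_eq_Icc hab.le]
  have hslope := h.localize.hasFDerivWithinAt_nonpos hf.hasFDerivAt.hasFDerivWithinAt hcone
  simp only [ContinuousLinearMap.toSpanSingleton_apply, smul_eq_mul] at hslope
  nlinarith

theorem one_sub_div_le_log_sub_log {a b : ℝ} (ha : 0 < a) (hb : 0 < b) :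
    1 - b / a ≤ log a - log b := by
  simpa [← log_div ha.ne' hb.ne'] using one_sub_inv_le_log_of_pos (div_pos ha hb)

/-- FU `k`'s payoff as a function of its own power `x`, with `h = h_{k,k}`, interference-plus-noise
`s` and `c = λ_k h_{k,0}`. -/
noncomputable def netPayoff (W pa c h s x : ℝ) : ℝ :=
  W * log (1 + h * x / s) / (x + pa) - c * x

/-- `(x + pa)²` times the derivative of `log (1 + h x / s) / (x + pa)`. -/
noncomputable def rateDerivNum (h pa s x : ℝ) : ℝ :=
  h * (x + pa) / (s + h * x) - log (1 + h * x / s)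

theorem hasDerivAt_netPayoff (W pa c h s : ℝ) {x : ℝ} (hs : 0 < s) (hsx : 0 < s + h * x)
    (hx : x + pa ≠ 0) :
    HasDerivAt (netPayoff W pa c h s) (W * rateDerivNum h pa s x / (x + pa) ^ 2 - c) x := by
  have hpos : 0 < 1 + h * x / s := by rw [one_add_div hs.ne']; positivity
  have hlog : HasDerivAt (fun y => log (1 + h * y / s)) (h / s / (1 + h * x / s)) x := by
    refine HasDerivAt.log ?_ hpos.ne'
    simpa using (((hasDerivAt_id x).const_mul h).div_const s).const_add 1
  have hpay := ((hlog.const_mul W).div ((hasDerivAt_id x).add_const pa) hx).sub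
    ((hasDerivAt_id x).const_mul c)
  refine hpay.congr_deriv ?_
  simp only [rateDerivNum, id, one_add_div hs.ne']
  field_simp

theorem rateDerivNum_eq {h pa s x : ℝ} (hs : 0 < s) (hsx : 0 < s + h * x) :
    rateDerivNum h pa s x = h * (x + pa) / (s + h * x) - (log (s + h * x) - log s) := by
  rw [rateDerivNum, one_add_div hs.ne', log_div hsx.ne' hs.ne']

theorem rateDerivNum_antitoneOn {h pa s : ℝ} (hh : 0 < h) (hpa : 0 ≤ pa) (hs : 0 < s) :
    AntitoneOn (rateDerivNum h pa s) (Ici 0) := by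
  intro x₁ hx₁ x₂ _ hx
  have hu₁ : 0 < s + h * x₁ := by positivity [mem_Ici.1 hx₁]
  have hu₂ : 0 < s + h * x₂ := by nlinarith
  have hlog := one_sub_div_le_log_sub_log hu₂ hu₁
  have hfrac : h * (x₂ + pa) / (s + h * x₂) - h * (x₁ + pa) / (s + h * x₁) ≤
      1 - (s + h * x₁) / (s + h * x₂) := by
    rw [div_sub_div _ _ hu₂.ne' hu₁.ne', one_sub_div hu₂.ne', div_le_div_iff₀ (by positivity) hu₂]
    nlinarith [mul_nonneg (mul_nonneg hh.le (sub_nonneg.2 hx)) (mul_nonneg hu₂.le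
      (mul_nonneg hh.le (add_nonneg (mem_Ici.1 hx₁) hpa)))]
  rw [rateDerivNum_eq hs hu₁, rateDerivNum_eq hs hu₂]
  linarith

theorem rateDerivNum_monotoneOn_interference {h pa x : ℝ} (hh : 0 < h) (hx : 0 ≤ x) :
    MonotoneOn (rateDerivNum h pa · x) {s | 0 < s ∧ s * pa ≤ h * x ^ 2} := by
  rintro s₁ ⟨hs₁, -⟩ s₂ ⟨hs₂, hcond⟩ hs
  have hu₁ : 0 < s₁ + h * x := by positivity
  have hu₂ : 0 < s₂ + h * x := by positivity
  have hlog := one_sub_div_le_log_sub_log (mul_pos hs₂ hu₁) (mul_pos hs₁ hu₂)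
  rw [log_mul hs₂.ne' hu₁.ne', log_mul hs₁.ne' hu₂.ne'] at hlog
  have hfrac : h * (x + pa) / (s₁ + h * x) - h * (x + pa) / (s₂ + h * x) ≤
      1 - s₁ * (s₂ + h * x) / (s₂ * (s₁ + h * x)) := by
    rw [div_sub_div _ _ hu₁.ne' hu₂.ne', one_sub_div (by positivity),
      div_le_div_iff₀ (by positivity) (by positivity)]
    nlinarith [mul_nonneg (mul_nonneg (mul_nonneg (sub_nonneg.2 hs) hu₁.le) hh.le)
      (sub_nonneg.2 hcond)]
  simp only [rateDerivNum_eq hs₁ hu₁, rateDerivNum_eq hs₂ hu₂]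
  linarith

theorem rateDerivNum_smul_lt {h pa s x α : ℝ} (hh : 0 < h) (hpa : 0 < pa) (hs : 0 < s)
    (hx : 0 ≤ x) (hα : 1 < α) :
    rateDerivNum h pa (α * s) (α * x) < rateDerivNum h pa s x := by
  have hα₀ : 0 < α := by linarith
  have hu : 0 < s + h * x := by positivity
  have hlog : h * (α * x) / (α * s) = h * x / s := by
    rw [mul_left_comm, mul_div_mul_left _ _ hα₀.ne']
  rw [rateDerivNum, rateDerivNum, hlog, show α * s + h * (α * x) = α * (s + h * x) by ring,
    sub_lt_sub_iff_right, div_lt_div_iff₀ (by positivity) hu]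
  nlinarith [mul_pos (mul_pos (mul_pos hh hu) hpa) (sub_pos.2 hα)]

theorem rateDerivNum_lt_of_scaled {h pa t t' x x' α : ℝ} (hh : 0 < h) (hpa : 0 < pa)
    (ht : 0 < t) (htt' : t ≤ t') (ht'α : t' ≤ α * t) (hα : 1 < α) (hx : 0 < x)
    (hxx' : α * x ≤ x') (hcond : t * pa ≤ h * x ^ 2) :
    rateDerivNum h pa t' x' < rateDerivNum h pa t x := by
  have hαx : 0 < α * x := by positivity
  have ht' : 0 < t' := ht.trans_le htt'
  have hcond' : α * t * pa ≤ h * (α * x) ^ 2 := by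
    nlinarith [mul_le_mul_of_nonneg_left hcond (by positivity : (0:ℝ) ≤ α * (α - 1)),
      mul_pos (mul_pos ht hpa) (by linarith : (0:ℝ) < α - 1)]
  calc rateDerivNum h pa t' x'
      ≤ rateDerivNum h pa t' (α * x) :=
        rateDerivNum_antitoneOn hh hpa.le ht' (mem_Ici.2 hαx.le)
          (mem_Ici.2 (hαx.le.trans hxx')) hxx'
    _ ≤ rateDerivNum h pa (α * t) (α * x) :=
        rateDerivNum_monotoneOn_interference hh hαx.le
          ⟨ht', (mul_le_mul_of_nonneg_right ht'α hpa.le).trans hcond'⟩ ⟨by positivity, hcond'⟩ ht'α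
    _ < rateDerivNum h pa t x := rateDerivNum_smul_lt hh hpa ht hx.le hα

theorem netPayoff_argmax_lt_smul {W pa c h t t' α M b b' : ℝ} (hW : 0 < W) (hpa : 0 < pa)
    (hc : 0 ≤ c) (hh : 0 < h) (ht : 0 < t) (htt' : t ≤ t') (ht'α : t' ≤ α * t) (hα : 1 < α)
    (hb : 0 < b) (hcond : t * pa ≤ h * b ^ 2)
    (hbmax : IsMaxOn (netPayoff W pa c h t) (Icc 0 M) b)
    (hb' : b' ∈ Icc 0 M) (hb'max : IsMaxOn (netPayoff W pa c h t') (Icc 0 M) b') :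
    b' < α * b := by
  by_contra! hle
  have hbb' : b < b' := by nlinarith
  have hb'pos : 0 < b' := hb.trans hbb'
  have ht' : 0 < t' := ht.trans_le htt'
  have hfoc : W * rateDerivNum h pa t b / (b + pa) ^ 2 - c = 0 :=
    (hbmax.isLocalMax (Icc_mem_nhds hb (hbb'.trans_le hb'.2))).hasDerivAt_eq_zero
      (hasDerivAt_netPayoff W pa c h t ht (by positivity) (by positivity))
  have hslope : 0 ≤ W * rateDerivNum h pa t' b' / (b' + pa) ^ 2 - c :=
    (hb'max.on_subset (Icc_subset_Icc_right hb'.2)).hasDerivAt_nonneg_of_Icc hb'pos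
      (hasDerivAt_netPayoff W pa c h t' ht' (by positivity) (by positivity))
  rw [sub_eq_zero, div_eq_iff (by positivity)] at hfoc
  rw [sub_nonneg, le_div_iff₀ (by positivity)] at hslope
  have hsq : (b + pa) ^ 2 ≤ (b' + pa) ^ 2 := by gcongr
  have hlt := rateDerivNum_lt_of_scaled hh hpa ht htt' ht'α hα hb hle hcond
  nlinarith [mul_le_mul_of_nonneg_left hsq hc]

section Game

variable {K : ℕ} (W pa p0 : ℝ) (hff : Fin K → Fin K → ℝ) (h0f hf0 N lam pmax : Fin K → ℝ)
  (k : Fin K)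

theorem payoff_update_self_eq_netPayoff (q : Fin K → ℝ) (y : ℝ) :
    payoff W pa p0 hff h0f hf0 N lam k (Function.update q k y) =
      netPayoff W pa (lam k * hf0 k) (hff k k)
        (N k + h0f k * p0 + ∑ j ∈ univ.erase k, hff j k * q j) y := by
  have hsum : ∑ j ∈ univ.erase k, hff j k * Function.update q k y j =
      ∑ j ∈ univ.erase k, hff j k * q j :=
    sum_congr rfl fun j hj => by rw [Function.update_of_ne (ne_of_mem_erase hj)]
  simp only [payoff, sinr, netPayoff, Function.update_self, hsum]

theorem IsBestResponse.isMaxOn {q : Fin K → ℝ} {x : ℝ}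
    (hx : IsBestResponse W pa p0 hff h0f hf0 N lam pmax k q x) :
    IsMaxOn (netPayoff W pa (lam k * hf0 k) (hff k k)
        (N k + h0f k * p0 + ∑ j ∈ univ.erase k, hff j k * q j)) (Icc 0 (pmax k)) x :=
  isMaxOn_iff.2 fun y hy => by simpa only [payoff_update_self_eq_netPayoff] using hx.2 y hy

end Game

theorem bestResponse_scalable_general {K : ℕ}
    (W pa p0 : ℝ) (hW : 0 < W) (hpa : 0 < pa) (hp0 : 0 ≤ p0)
    (hff : Fin K → Fin K → ℝ) (h0f hf0 N lam pmax : Fin K → ℝ)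
    (hhff : ∀ i j, 0 < hff i j) (hh0f : ∀ i, 0 < h0f i) (hhf0 : ∀ i, 0 < hf0 i)
    (hN : ∀ i, 0 < N i) (hlam : ∀ i, 0 ≤ lam i)
    (k : Fin K) (p : Fin K → ℝ) (hp : ∀ i, i ≠ k → 0 ≤ p i)
    (α : ℝ) (hα : 1 < α)
    (hcond : ∀ q : Fin K → ℝ, (∀ i, i ≠ k → p i ≤ q i ∧ q i ≤ α * p i) →
      ∀ b : ℝ, IsBestResponse W pa p0 hff h0f hf0 N lam pmax k q b →
        pa * (N k + h0f k * p0 + hff k k * b + ∑ j ∈ Finset.univ.erase k, hff j k * q j) ≤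
          hff k k * b ^ 2)
    (b b' : ℝ)
    (hb : IsBestResponse W pa p0 hff h0f hf0 N lam pmax k p b) (hbpos : 0 < b)
    (hb' : IsBestResponse W pa p0 hff h0f hf0 N lam pmax k (fun i => α * p i) b') :
    b' < α * b := by
  set S := ∑ j ∈ univ.erase k, hff j k * p j
  have hS : 0 ≤ S := sum_nonneg fun j hj => mul_nonneg (hhff j k).le (hp j (ne_of_mem_erase hj))
  have hSα : ∑ j ∈ univ.erase k, hff j k * (α * p j) = α * S := by
    rw [mul_sum]; exact sum_congr rfl fun j _ => by ring
  have hI : 0 < N k + h0f k * p0 := by nlinarith [hN k, hh0f k]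
  have hbound : (N k + h0f k * p0 + S) * pa ≤ hff k k * b ^ 2 := by
    have hcond_p := hcond p (fun i hi => ⟨le_rfl, by nlinarith [hp i hi]⟩) b hb
    nlinarith [mul_pos (mul_pos hpa (hhff k k)) hbpos]
  have hb'max := hb'.isMaxOn
  rw [hSα] at hb'max
  exact netPayoff_argmax_lt_smul hW hpa (mul_nonneg (hlam k) (hhf0 k).le) (hhff k k)
    (by positivity) (by nlinarith) (by nlinarith) hα hbpos hbound hb.isMaxOn hb'.1 hb'max

/-- Scalability of the best response: under the SINR-type condition on the order interval
between `p_{-k}` and `α·p_{-k}`, and positivity of the best response at `p_{-k}`,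
one has `α·p̂_k(p_{-k}) > p̂_k(α·p_{-k})` for every `α > 1`. -/
theorem bestResponse_scalable {K : ℕ} (hK : 1 ≤ K)
    (W pa p0 : ℝ) (hW : 0 < W) (hpa : 0 < pa) (hp0 : 0 ≤ p0)
    (hff : Fin K → Fin K → ℝ) (h0f hf0 N lam pmax : Fin K → ℝ)
    (hhff : ∀ i j, 0 < hff i j) (hh0f : ∀ i, 0 < h0f i) (hhf0 : ∀ i, 0 < hf0 i)
    (hN : ∀ i, 0 < N i) (hlam : ∀ i, 0 ≤ lam i) (hpmax : ∀ i, 0 < pmax i)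
    (k : Fin K) (p : Fin K → ℝ) (hp : ∀ i, i ≠ k → 0 ≤ p i)
    (α : ℝ) (hα : 1 < α)
    (hcond : ∀ q : Fin K → ℝ, (∀ i, i ≠ k → p i ≤ q i ∧ q i ≤ α * p i) →
      ∀ b : ℝ, IsBestResponse W pa p0 hff h0f hf0 N lam pmax k q b →
        pa * (N k + h0f k * p0 + hff k k * b + ∑ j ∈ Finset.univ.erase k, hff j k * q j) ≤
          hff k k * b ^ 2)
    (b b' : ℝ)
    (hb : IsBestResponse W pa p0 hff h0f hf0 N lam pmax k p b) (hbpos : 0 < b)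
    (hb' : IsBestResponse W pa p0 hff h0f hf0 N lam pmax k (fun i => α * p i) b') :
    b' < α * b :=
  bestResponse_scalable_general W pa p0 hW hpa hp0 hff h0f hf0 N lam pmax hhff hh0f hhf0 hN hlam k p
    hp α hα hcond b b' hb hbpos hb'
end

section
/- Assume that for every FU k and every feasible opponent vector q_{-k} ∈ ∏_{j≠k}[0, p_j^max]: (i) λ_k·h_{k,0} < W·G_k(q_{-k})/p_a, and (ii) the best response b = p̂_k(q_{-k}) satisfies h_{k,k}·b² ≥ p_a·(N_k + h_{0,k}·p_0 + h_{k,k}·b + Σ_{j≠k} h_{j,k}·q_j). Then the follower game has exactly one Nash equilibrium: there is a unique power vector p* ∈ ∏_k [0, p_k^max] such that for every k and every p_k ∈ [0, p_k^max], u_k(p*_k, p*_{-k}) ≥ u_k(p_k, p*_{-k}). (Theorem 2.) -/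
open Real Finset

/-!
The payoff of FU `k` depends on the other users only through its noise-plus-interference level
`D`, and its derivative in `p_k` has the sign of a function `ψ_D(p_k)` that is strictly decreasing
in `p_k` and, by (i), positive at `0`. Hence the best response is unique: the root of `ψ_D`, or
`p_k^max` if there is none. Condition (ii) makes `ψ_D(b)` nondecreasing in `D` at best responses
`b`, so best responses are monotone in the opponents' powers and Tarski's fixed-point theorem on
the box of feasible powers yields an equilibrium. Moreover `ψ_{αD}(α p) < ψ_D(p)` for `α > 1`, so
best responses are strictly subhomogeneous; comparing two equilibria `p`, `q` through the largest
ratio `q_k / p_k` then shows `q ≤ p`, and symmetrically `p ≤ q`.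
-/

open Set

theorem exists_isFixedPt_of_mapsTo_of_monotoneOn {α : Type*} [ConditionallyCompleteLattice α]
    {a b : α} (hab : a ≤ b) {f : α → α} (hmaps : MapsTo f (Icc a b) (Icc a b))
    (hmono : MonotoneOn f (Icc a b)) : ∃ x ∈ Icc a b, Function.IsFixedPt f x := by
  have : Fact (a ≤ b) := ⟨hab⟩
  let g : Icc a b →o Icc a b := ⟨hmaps.restrict, fun x y hxy => hmono x.2 y.2 hxy⟩
  exact ⟨_, g.lfp.2, congrArg Subtype.val g.map_lfp⟩

theorem le_of_forall_le_smul_imp_lt {ι : Type*} [Finite ι] {p q : ι → ℝ} (hp : ∀ i, 0 < p i)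
    (h : ∀ α : ℝ, 1 < α → q ≤ α • p → ∀ i, q i < α * p i) : q ≤ p := by
  by_contra hqp
  obtain ⟨i, hi⟩ : ∃ i, ¬q i ≤ p i := by simpa [Pi.le_def] using hqp
  have : Nonempty ι := ⟨i⟩
  obtain ⟨k, hk⟩ := Finite.exists_max fun j => q j / p j
  have hα : 1 < q k / p k := ((one_lt_div (hp i)).2 (not_le.1 hi)).trans_le (hk i)
  have hqα : q ≤ (q k / p k) • p := fun j => (div_le_iff₀ (hp j)).1 (hk j)
  have := h _ hα hqα k
  rw [div_mul_cancel₀ _ (hp k).ne'] at this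
  exact lt_irrefl _ this

theorem lt_of_hasDerivAt_of_pos_of_neg {u u' : ℝ → ℝ} {a b c y : ℝ}
    (hu : ∀ x ∈ Icc a c, HasDerivAt u (u' x) x) (hpos : ∀ x ∈ Ioo a b, 0 < u' x)
    (hneg : ∀ x ∈ Ioo b c, u' x < 0) (hb : b ∈ Icc a c) (hy : y ∈ Icc a c) (hyb : y ≠ b) :
    u y < u b := by
  have hcont : ContinuousOn u (Icc a c) := fun x hx => (hu x hx).continuousAt.continuousWithinAt
  rcases hyb.lt_or_gt with hlt | hgt
  · have hmono : StrictMonoOn u (Icc a b) := by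
      refine strictMonoOn_of_deriv_pos (convex_Icc a b) (hcont.mono (Icc_subset_Icc_right hb.2))
        fun x hx => ?_
      rw [interior_Icc] at hx
      rw [(hu x ⟨hx.1.le, hx.2.le.trans hb.2⟩).deriv]
      exact hpos x hx
    exact hmono ⟨hy.1, hlt.le⟩ ⟨hb.1, le_rfl⟩ hlt
  · have hanti : StrictAntiOn u (Icc b c) := by
      refine strictAntiOn_of_deriv_neg (convex_Icc b c) (hcont.mono (Icc_subset_Icc_left hb.1))
        fun x hx => ?_
      rw [interior_Icc] at hx
      rw [(hu x ⟨hb.1.trans hx.1.le, hx.2.le⟩).deriv]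
      exact hneg x hx
    exact hanti ⟨le_rfl, hb.2⟩ ⟨hgt.le, hy.2⟩ hgt

/-- The first-order conditions for maximizing, over `[0, M]`, a function whose derivative has the
sign of `ψ`, together with `b > 0`. -/
def IsKKTPoint (ψ : ℝ → ℝ) (M b : ℝ) : Prop :=
  b ∈ Ioc 0 M ∧ 0 ≤ ψ b ∧ (b < M → ψ b = 0)

theorem exists_isKKTPoint {ψ : ℝ → ℝ} {M : ℝ} (hM : 0 < M) (hψ : ContinuousOn ψ (Icc 0 M))
    (hψ0 : 0 < ψ 0) : ∃ b, IsKKTPoint ψ M b := by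
  by_cases hψM : 0 ≤ ψ M
  · exact ⟨M, ⟨hM, le_rfl⟩, hψM, fun h => (lt_irrefl M h).elim⟩
  obtain ⟨b, hb, hψb⟩ := intermediate_value_Icc' hM.le hψ ⟨(not_le.1 hψM).le, hψ0.le⟩
  have hb0 : 0 ≠ b := by rintro rfl; exact hψ0.ne' hψb
  exact ⟨b, ⟨lt_of_le_of_ne hb.1 hb0, hb.2⟩, hψb.ge, fun _ => hψb⟩

/-- The payoff of a user with direct gain `h`, price `c` and noise-plus-interference level `D`. -/
noncomputable def reducedPayoff (W pa h c D p : ℝ) : ℝ :=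
  W * log (1 + h * p / D) / (p + pa) - c * p

/-- `(p + pa) ^ 2` times the derivative of `reducedPayoff` in `p`. -/
noncomputable def derivNumer (W pa h c D p : ℝ) : ℝ :=
  W * (h * (p + pa) / (D + h * p) - log (1 + h * p / D)) - c * (p + pa) ^ 2

section SingleUser

variable {W pa h c D M : ℝ}

theorem hasDerivAt_reducedPayoff (hpa : 0 < pa) (hh : 0 ≤ h) (hD : 0 < D) {p : ℝ} (hp : 0 ≤ p) :
    HasDerivAt (reducedPayoff W pa h c D) (derivNumer W pa h c D p / (p + pa) ^ 2) p := by
  have hlog : HasDerivAt (fun x => 1 + h * x / D) (h / D) p := by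
    simpa using ((hasDerivAt_id' p).const_mul h).div_const D |>.const_add 1
  have := (((hlog.log (by positivity)).const_mul W).div ((hasDerivAt_id' p).add_const pa)
    (by positivity)).sub ((hasDerivAt_id' p).const_mul c)
  refine this.congr_deriv ?_
  unfold derivNumer
  field_simp

theorem hasDerivAt_derivNumer (hh : 0 ≤ h) (hD : 0 < D) {p : ℝ} (hp : 0 ≤ p) :
    HasDerivAt (derivNumer W pa h c D)
      (-(W * h ^ 2 * (p + pa) / (D + h * p) ^ 2) - 2 * c * (p + pa)) p := by
  have hlog : HasDerivAt (fun x => 1 + h * x / D) (h / D) p := by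
    simpa using ((hasDerivAt_id' p).const_mul h).div_const D |>.const_add 1
  have hrat : HasDerivAt (fun x => h * (x + pa) / (D + h * x)) _ p :=
    (((hasDerivAt_id' p).add_const pa).const_mul h).div
      (((hasDerivAt_id' p).const_mul h).const_add D) (by positivity)
  have := ((hrat.sub (hlog.log (by positivity))).const_mul W).sub
    ((((hasDerivAt_id' p).add_const pa).pow 2).const_mul c)
  refine this.congr_deriv ?_
  field_simp
  ring

theorem derivNumer_strictAntiOn (hW : 0 < W) (hpa : 0 < pa) (hh : 0 < h) (hc : 0 ≤ c)
    (hD : 0 < D) : StrictAntiOn (derivNumer W pa h c D) (Ici 0) := by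
  refine strictAntiOn_of_deriv_neg (convex_Ici 0)
    (fun x hx => (hasDerivAt_derivNumer hh.le hD hx).continuousAt.continuousWithinAt)
    fun x hx => ?_
  rw [interior_Ici] at hx
  have hx : 0 < x := hx
  rw [(hasDerivAt_derivNumer hh.le hD hx.le).deriv]
  have : 0 < W * h ^ 2 * (x + pa) / (D + h * x) ^ 2 := by positivity
  have : 0 ≤ 2 * c * (x + pa) := by positivity
  linarith

theorem derivNumer_zero_pos (hpa : 0 < pa) (hprice : c < W * (h / D) / pa) :
    0 < derivNumer W pa h c D 0 := by
  rw [lt_div_iff₀ hpa] at hprice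
  simp only [derivNumer, zero_add, mul_zero, add_zero, zero_div, log_one, sub_zero]
  field_simp
  exact mul_pos hpa (by rw [mul_div_assoc]; linarith)

/-- After `log x ≥ 1 - x⁻¹`, what remains is `h (D' - D) (h p ^ 2 - pa D')` over a positive
denominator: this is where condition (ii) enters. -/
theorem derivNumer_le_derivNumer_of_le (hW : 0 ≤ W) (hh : 0 ≤ h) (hD : 0 < D) {D' p : ℝ}
    (hDD' : D ≤ D') (hp : 0 ≤ p) (hcond : pa * D' ≤ h * p ^ 2) :
    derivNumer W pa h c D p ≤ derivNumer W pa h c D' p := by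
  have hD' : 0 < D' := hD.trans_le hDD'
  set X := (1 + h * p / D) / (1 + h * p / D')
  have hX : 0 < X := by positivity
  have hlog : log (1 + h * p / D) - log (1 + h * p / D') = log X :=
    (log_div (by positivity) (by positivity)).symm
  have hgap : 1 - X⁻¹ - (h * (p + pa) / (D + h * p) - h * (p + pa) / (D' + h * p))
      = h * (D' - D) * (h * p ^ 2 - pa * D') / (D' * (D + h * p) * (D' + h * p)) := by
    simp only [X]
    field_simp
    ring
  have hgap_nonneg :
      0 ≤ h * (D' - D) * (h * p ^ 2 - pa * D') / (D' * (D + h * p) * (D' + h * p)) :=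
    div_nonneg (mul_nonneg (mul_nonneg hh (by linarith)) (by linarith)) (by positivity)
  have := one_sub_inv_le_log_of_pos hX
  unfold derivNumer
  linarith [mul_le_mul_of_nonneg_left (show h * (p + pa) / (D + h * p) - h * (p + pa) / (D' + h * p)
    ≤ log (1 + h * p / D) - log (1 + h * p / D') by linarith) hW]

theorem derivNumer_mul_lt (hW : 0 < W) (hpa : 0 < pa) (hh : 0 < h) (hc : 0 ≤ c) (hD : 0 < D)
    {α p : ℝ} (hα : 1 < α) (hp : 0 ≤ p) :
    derivNumer W pa h c (α * D) (α * p) < derivNumer W pa h c D p := by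
  have hα0 : 0 < α := by linarith
  have hlog : 1 + h * (α * p) / (α * D) = 1 + h * p / D := by
    rw [mul_left_comm, mul_div_mul_left _ _ hα0.ne']
  have hrat : h * (p + pa) / (D + h * p) - h * (α * p + pa) / (α * D + h * (α * p))
      = h * pa * (α - 1) / (α * (D + h * p)) := by
    field_simp
    ring
  have hrat_pos : 0 < h * pa * (α - 1) / (α * (D + h * p)) :=
    div_pos (mul_pos (mul_pos hh hpa) (by linarith)) (by positivity)
  have hquad : c * (p + pa) ^ 2 ≤ c * (α * p + pa) ^ 2 := by
    gcongr
    nlinarith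
  unfold derivNumer
  rw [hlog]
  linarith [mul_lt_mul_of_pos_left (show h * (α * p + pa) / (α * D + h * (α * p))
    < h * (p + pa) / (D + h * p) by linarith) hW]

theorem exists_isKKTPoint_derivNumer (hpa : 0 < pa) (hh : 0 ≤ h) (hD : 0 < D) (hM : 0 < M)
    (hprice : c < W * (h / D) / pa) : ∃ b, IsKKTPoint (derivNumer W pa h c D) M b :=
  exists_isKKTPoint hM
    (fun _ hx => (hasDerivAt_derivNumer hh hD hx.1).continuousAt.continuousWithinAt)
    (derivNumer_zero_pos hpa hprice)

theorem isMaxOn_reducedPayoff_iff (hW : 0 < W) (hpa : 0 < pa) (hh : 0 < h) (hc : 0 ≤ c)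
    (hD : 0 < D) (hM : 0 < M) (hprice : c < W * (h / D) / pa) {b : ℝ} (hb : b ∈ Icc 0 M) :
    IsMaxOn (reducedPayoff W pa h c D) (Icc 0 M) b ↔ IsKKTPoint (derivNumer W pa h c D) M b := by
  have hanti := derivNumer_strictAntiOn hW hpa hh hc hD
  have hstrict : ∀ b, IsKKTPoint (derivNumer W pa h c D) M b → ∀ y ∈ Icc 0 M, y ≠ b →
      reducedPayoff W pa h c D y < reducedPayoff W pa h c D b := by
    rintro b ⟨hb, hψb, hψM⟩ y hy hyb
    refine lt_of_hasDerivAt_of_pos_of_neg (fun x hx => hasDerivAt_reducedPayoff hpa hh.le hD hx.1)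
      (fun x hx => div_pos ?_ (by nlinarith [hx.1])) (fun x hx => div_neg_of_neg_of_pos ?_
        (by nlinarith [hx.1, hb.1])) (Ioc_subset_Icc_self hb) hy hyb
    · exact hψb.trans_lt (hanti hx.1.le (hx.1.le.trans hx.2.le) hx.2)
    · exact hψM (hx.1.trans hx.2) ▸ hanti hb.1.le (hb.1.le.trans hx.1.le) hx.1
  constructor
  · intro hmax
    obtain ⟨b', hb'⟩ := exists_isKKTPoint_derivNumer hpa hh.le hD hM hprice
    obtain rfl : b = b' := by
      by_contra hne
      exact (hstrict b' hb' b hb hne).not_ge (isMaxOn_iff.1 hmax b' (Ioc_subset_Icc_self hb'.1))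
    exact hb'
  · refine fun hkkt => isMaxOn_iff.2 fun y hy => ?_
    rcases eq_or_ne y b with rfl | hyb
    · exact le_rfl
    · exact (hstrict b hkkt y hy hyb).le

theorem exists_isMaxOn_reducedPayoff (hW : 0 < W) (hpa : 0 < pa) (hh : 0 < h) (hc : 0 ≤ c)
    (hD : 0 < D) (hM : 0 < M) (hprice : c < W * (h / D) / pa) :
    ∃ b ∈ Icc 0 M, IsMaxOn (reducedPayoff W pa h c D) (Icc 0 M) b := by
  obtain ⟨b, hb⟩ := exists_isKKTPoint_derivNumer hpa hh.le hD hM hprice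
  have hbM := Ioc_subset_Icc_self hb.1
  exact ⟨b, hbM, (isMaxOn_reducedPayoff_iff hW hpa hh hc hD hM hprice hbM).2 hb⟩

theorem IsKKTPoint.le_of_le (hW : 0 < W) (hpa : 0 < pa) (hh : 0 < h) (hc : 0 ≤ c) (hD : 0 < D)
    {D' b b' : ℝ} (hDD' : D ≤ D') (hb : IsKKTPoint (derivNumer W pa h c D) M b)
    (hb' : IsKKTPoint (derivNumer W pa h c D') M b') (hcond : pa * D' ≤ h * b' ^ 2) : b ≤ b' := by
  by_contra! hlt
  have hroot : derivNumer W pa h c D' b' = 0 := hb'.2.2 (hlt.trans_le hb.1.2)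
  have hle : derivNumer W pa h c D b' ≤ 0 :=
    hroot ▸ derivNumer_le_derivNumer_of_le hW.le hh.le hD hDD' hb'.1.1.le hcond
  have hlt' := derivNumer_strictAntiOn hW hpa hh hc hD hb'.1.1.le hb.1.1.le hlt
  linarith [hb.2.1]

theorem IsKKTPoint.lt_mul (hW : 0 < W) (hpa : 0 < pa) (hh : 0 < h) (hc : 0 ≤ c) (hD : 0 < D)
    {D' b b' α : ℝ} (hα : 1 < α) (hD' : 0 < D') (hD'D : D' ≤ α * D)
    (hb : IsKKTPoint (derivNumer W pa h c D) M b) (hb' : IsKKTPoint (derivNumer W pa h c D') M b')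
    (hcond : pa * D ≤ h * b ^ 2) : b' < α * b := by
  by_contra! hle
  have hb0 := hb.1.1
  have hroot : derivNumer W pa h c D b = 0 :=
    hb.2.2 ((lt_mul_of_one_lt_left hb0 hα).trans_le (hle.trans hb'.1.2))
  have hneg : derivNumer W pa h c (α * D) (α * b) < 0 :=
    hroot ▸ derivNumer_mul_lt hW hpa hh hc hD hα hb0.le
  have hcondα : pa * (α * D) ≤ h * (α * b) ^ 2 := by
    nlinarith [mul_le_mul_of_nonneg_left hcond (by positivity : (0 : ℝ) ≤ α),
      mul_le_mul_of_nonneg_right hα.le (by positivity : 0 ≤ α * (h * b ^ 2))]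
  have hmono := derivNumer_le_derivNumer_of_le (c := c) hW.le hh.le hD' hD'D (by positivity) hcondα
  have hanti := (derivNumer_strictAntiOn hW hpa hh hc hD').antitoneOn
    (show (0 : ℝ) ≤ α * b by positivity) (hb'.1.1.le : (0 : ℝ) ≤ b') hle
  linarith [hb'.2.1]

end SingleUser

noncomputable def interference {K : ℕ} (p0 : ℝ) (hff : Fin K → Fin K → ℝ) (h0f N : Fin K → ℝ)
    (k : Fin K) (q : Fin K → ℝ) : ℝ :=
  N k + h0f k * p0 + ∑ j ∈ univ.erase k, hff j k * q j

structure StandingAssumptions {K : ℕ} (W pa p0 : ℝ) (hff : Fin K → Fin K → ℝ)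
    (h0f hf0 N lam pmax : Fin K → ℝ) : Prop where
  W_pos : 0 < W
  pa_pos : 0 < pa
  p0_nonneg : 0 ≤ p0
  hff_pos : ∀ i j, 0 < hff i j
  h0f_pos : ∀ i, 0 < h0f i
  hf0_pos : ∀ i, 0 < hf0 i
  N_pos : ∀ i, 0 < N i
  lam_nonneg : ∀ i, 0 ≤ lam i
  pmax_pos : ∀ i, 0 < pmax i

/-- Condition (i). -/
def PriceCondition {K : ℕ} (W pa p0 : ℝ) (hff : Fin K → Fin K → ℝ)
    (h0f hf0 N lam pmax : Fin K → ℝ) : Prop :=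
  ∀ (k : Fin K) (q : Fin K → ℝ), (∀ i, q i ∈ Icc 0 (pmax i)) →
    lam k * hf0 k < W * Gk hff h0f N p0 k q / pa

/-- Condition (ii). -/
def BestResponseCondition {K : ℕ} (W pa p0 : ℝ) (hff : Fin K → Fin K → ℝ)
    (h0f hf0 N lam pmax : Fin K → ℝ) : Prop :=
  ∀ (k : Fin K) (q : Fin K → ℝ), (∀ i, q i ∈ Icc 0 (pmax i)) →
    ∀ b : ℝ, IsBestResponse W pa p0 hff h0f hf0 N lam pmax k q b →
      pa * (N k + h0f k * p0 + hff k k * b + ∑ j ∈ univ.erase k, hff j k * q j) ≤ hff k k * b ^ 2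

def IsNashEquilibrium {K : ℕ} (W pa p0 : ℝ) (hff : Fin K → Fin K → ℝ)
    (h0f hf0 N lam pmax : Fin K → ℝ) (p : Fin K → ℝ) : Prop :=
  (∀ k, p k ∈ Icc 0 (pmax k)) ∧ ∀ k, ∀ x ∈ Icc 0 (pmax k),
    payoff W pa p0 hff h0f hf0 N lam k (Function.update p k x) ≤ payoff W pa p0 hff h0f hf0 N lam k p

section Game

variable {K : ℕ} {W pa p0 : ℝ} {hff : Fin K → Fin K → ℝ} {h0f hf0 N lam pmax : Fin K → ℝ}
  {k : Fin K} {p q q' : Fin K → ℝ} {b b' : ℝ}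

theorem interference_pos (hp0 : 0 ≤ p0) (hh0f : 0 ≤ h0f k) (hN : 0 < N k)
    (hhff : ∀ j, 0 ≤ hff j k) (hq : ∀ j, 0 ≤ q j) : 0 < interference p0 hff h0f N k q := by
  have := sum_nonneg fun j (_ : j ∈ univ.erase k) => mul_nonneg (hhff j) (hq j)
  have := mul_nonneg hh0f hp0
  unfold interference
  linarith

theorem interference_monotone (hhff : ∀ j, 0 ≤ hff j k) :
    Monotone (interference p0 hff h0f N k) := fun q q' hqq' => by
  unfold interference
  gcongr with j
  exacts [hhff j, hqq' j]

theorem interference_le_mul (hp0 : 0 ≤ p0) (hh0f : 0 ≤ h0f k) (hN : 0 ≤ N k)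
    (hhff : ∀ j, 0 ≤ hff j k) {α : ℝ} (hα : 1 ≤ α) (hqp : q ≤ α • p) :
    interference p0 hff h0f N k q ≤ α * interference p0 hff h0f N k p := by
  have hscale : interference p0 hff h0f N k (α • p)
      = α * interference p0 hff h0f N k p - (α - 1) * (N k + h0f k * p0) := by
    simp only [interference, Pi.smul_apply, smul_eq_mul, mul_add, mul_sum]
    rw [sum_congr rfl fun j _ => mul_left_comm (hff j k) α (p j)]
    ring
  have := mul_nonneg (sub_nonneg.2 hα) (add_nonneg hN (mul_nonneg hh0f hp0))
  linarith [interference_monotone (p0 := p0) (h0f := h0f) (N := N) hhff hqp]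

theorem payoff_update (k : Fin K) (q : Fin K → ℝ) (y : ℝ) :
    payoff W pa p0 hff h0f hf0 N lam k (Function.update q k y) =
      reducedPayoff W pa (hff k k) (lam k * hf0 k) (interference p0 hff h0f N k q) y := by
  have hsum : ∑ j ∈ univ.erase k, hff j k * Function.update q k y j
      = ∑ j ∈ univ.erase k, hff j k * q j :=
    sum_congr rfl fun j hj => by rw [Function.update_of_ne (ne_of_mem_erase hj)]
  simp only [payoff, sinr, reducedPayoff, interference, Function.update_self, hsum]

theorem isBestResponse_iff :
    IsBestResponse W pa p0 hff h0f hf0 N lam pmax k q b ↔ b ∈ Icc 0 (pmax k) ∧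
      IsMaxOn (reducedPayoff W pa (hff k k) (lam k * hf0 k) (interference p0 hff h0f N k q))
        (Icc 0 (pmax k)) b := by
  simp only [IsBestResponse, payoff_update, isMaxOn_iff]

theorem isNashEquilibrium_iff :
    IsNashEquilibrium W pa p0 hff h0f hf0 N lam pmax p ↔
      ∀ k, IsBestResponse W pa p0 hff h0f hf0 N lam pmax k p (p k) := by
  simp only [IsNashEquilibrium, IsBestResponse, Function.update_eq_self, forall_and]

theorem StandingAssumptions.interference_pos
    (hA : StandingAssumptions W pa p0 hff h0f hf0 N lam pmax) (hq : ∀ i, q i ∈ Icc 0 (pmax i)) :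
    0 < interference p0 hff h0f N k q :=
  _root_.interference_pos hA.p0_nonneg (hA.h0f_pos k).le (hA.N_pos k)
    (fun j => (hA.hff_pos j k).le) fun j => (hq j).1

theorem StandingAssumptions.lam_mul_hf0_nonneg
    (hA : StandingAssumptions W pa p0 hff h0f hf0 N lam pmax) (k : Fin K) : 0 ≤ lam k * hf0 k :=
  mul_nonneg (hA.lam_nonneg k) (hA.hf0_pos k).le

theorem IsBestResponse.isKKTPoint (hA : StandingAssumptions W pa p0 hff h0f hf0 N lam pmax)
    (hprice : PriceCondition W pa p0 hff h0f hf0 N lam pmax) (hq : ∀ i, q i ∈ Icc 0 (pmax i))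
    (hb : IsBestResponse W pa p0 hff h0f hf0 N lam pmax k q b) :
    IsKKTPoint (derivNumer W pa (hff k k) (lam k * hf0 k) (interference p0 hff h0f N k q))
      (pmax k) b := by
  obtain ⟨hbM, hmax⟩ := isBestResponse_iff.1 hb
  exact (isMaxOn_reducedPayoff_iff hA.W_pos hA.pa_pos (hA.hff_pos k k)
    (hA.lam_mul_hf0_nonneg k) (hA.interference_pos hq) (hA.pmax_pos k)
    (hprice k q hq) hbM).1 hmax

theorem exists_isBestResponse (hA : StandingAssumptions W pa p0 hff h0f hf0 N lam pmax)
    (hprice : PriceCondition W pa p0 hff h0f hf0 N lam pmax) (hq : ∀ i, q i ∈ Icc 0 (pmax i))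
    (k : Fin K) : ∃ b, IsBestResponse W pa p0 hff h0f hf0 N lam pmax k q b := by
  obtain ⟨b, hbM, hmax⟩ := exists_isMaxOn_reducedPayoff hA.W_pos hA.pa_pos (hA.hff_pos k k)
    (hA.lam_mul_hf0_nonneg k) (hA.interference_pos hq) (hA.pmax_pos k)
    (hprice k q hq)
  exact ⟨b, isBestResponse_iff.2 ⟨hbM, hmax⟩⟩

theorem BestResponseCondition.mul_interference_le
    (hcond : BestResponseCondition W pa p0 hff h0f hf0 N lam pmax) (hpa : 0 ≤ pa)
    (hh : 0 ≤ hff k k) (hq : ∀ i, q i ∈ Icc 0 (pmax i))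
    (hb : IsBestResponse W pa p0 hff h0f hf0 N lam pmax k q b) :
    pa * interference p0 hff h0f N k q ≤ hff k k * b ^ 2 := by
  have := hcond k q hq b hb
  have := mul_nonneg hpa (mul_nonneg hh hb.1.1)
  unfold interference
  linarith

theorem IsBestResponse.mono (hA : StandingAssumptions W pa p0 hff h0f hf0 N lam pmax)
    (hprice : PriceCondition W pa p0 hff h0f hf0 N lam pmax)
    (hcond : BestResponseCondition W pa p0 hff h0f hf0 N lam pmax)
    (hq : ∀ i, q i ∈ Icc 0 (pmax i)) (hq' : ∀ i, q' i ∈ Icc 0 (pmax i)) (hqq' : q ≤ q')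
    (hb : IsBestResponse W pa p0 hff h0f hf0 N lam pmax k q b)
    (hb' : IsBestResponse W pa p0 hff h0f hf0 N lam pmax k q' b') : b ≤ b' :=
  (hb.isKKTPoint hA hprice hq).le_of_le hA.W_pos hA.pa_pos (hA.hff_pos k k)
    (hA.lam_mul_hf0_nonneg k) (hA.interference_pos hq)
    (interference_monotone (fun j => (hA.hff_pos j k).le) hqq') (hb'.isKKTPoint hA hprice hq')
    (hcond.mul_interference_le hA.pa_pos.le (hA.hff_pos k k).le hq' hb')

theorem IsBestResponse.lt_mul (hA : StandingAssumptions W pa p0 hff h0f hf0 N lam pmax)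
    (hprice : PriceCondition W pa p0 hff h0f hf0 N lam pmax)
    (hcond : BestResponseCondition W pa p0 hff h0f hf0 N lam pmax)
    (hp : ∀ i, p i ∈ Icc 0 (pmax i)) (hq : ∀ i, q i ∈ Icc 0 (pmax i)) {α : ℝ} (hα : 1 < α)
    (hqp : q ≤ α • p) (hb : IsBestResponse W pa p0 hff h0f hf0 N lam pmax k p b)
    (hb' : IsBestResponse W pa p0 hff h0f hf0 N lam pmax k q b') : b' < α * b :=
  (hb.isKKTPoint hA hprice hp).lt_mul hA.W_pos hA.pa_pos (hA.hff_pos k k)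
    (hA.lam_mul_hf0_nonneg k) (hA.interference_pos hp) hα
    (hA.interference_pos hq)
    (interference_le_mul hA.p0_nonneg (hA.h0f_pos k).le (hA.N_pos k).le
      (fun j => (hA.hff_pos j k).le) hα.le hqp)
    (hb'.isKKTPoint hA hprice hq) (hcond.mul_interference_le hA.pa_pos.le (hA.hff_pos k k).le hp hb)

theorem IsNashEquilibrium.le_of_isNashEquilibrium
    (hq : IsNashEquilibrium W pa p0 hff h0f hf0 N lam pmax q)
    (hA : StandingAssumptions W pa p0 hff h0f hf0 N lam pmax)
    (hprice : PriceCondition W pa p0 hff h0f hf0 N lam pmax)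
    (hcond : BestResponseCondition W pa p0 hff h0f hf0 N lam pmax)
    (hp : IsNashEquilibrium W pa p0 hff h0f hf0 N lam pmax p) : q ≤ p := by
  rw [isNashEquilibrium_iff] at hp hq
  exact le_of_forall_le_smul_imp_lt (fun k => ((hp k).isKKTPoint hA hprice fun i => (hp i).1).1.1)
    fun α hα hqp k =>
      (hp k).lt_mul hA hprice hcond (fun i => (hp i).1) (fun i => (hq i).1) hα hqp (hq k)

end Game

theorem followerGame_unique_NE_general {K : ℕ}
    (W pa p0 : ℝ) (hW : 0 < W) (hpa : 0 < pa) (hp0 : 0 ≤ p0)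
    (hff : Fin K → Fin K → ℝ) (h0f hf0 N lam pmax : Fin K → ℝ)
    (hhff : ∀ i j, 0 < hff i j) (hh0f : ∀ i, 0 < h0f i) (hhf0 : ∀ i, 0 < hf0 i)
    (hN : ∀ i, 0 < N i) (hlam : ∀ i, 0 ≤ lam i) (hpmax : ∀ i, 0 < pmax i)
    (hprice : ∀ (k : Fin K) (q : Fin K → ℝ), (∀ i, q i ∈ Set.Icc (0:ℝ) (pmax i)) →
      lam k * hf0 k < W * Gk hff h0f N p0 k q / pa)
    (hcond : ∀ (k : Fin K) (q : Fin K → ℝ), (∀ i, q i ∈ Set.Icc (0:ℝ) (pmax i)) →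
      ∀ b : ℝ, IsBestResponse W pa p0 hff h0f hf0 N lam pmax k q b →
        pa * (N k + h0f k * p0 + hff k k * b + ∑ j ∈ Finset.univ.erase k, hff j k * q j) ≤
          hff k k * b ^ 2) :
    ∃! p : Fin K → ℝ, (∀ k, p k ∈ Set.Icc (0:ℝ) (pmax k)) ∧
      ∀ k : Fin K, ∀ x ∈ Set.Icc (0:ℝ) (pmax k),
        payoff W pa p0 hff h0f hf0 N lam k (Function.update p k x) ≤
          payoff W pa p0 hff h0f hf0 N lam k p := by
  have hA : StandingAssumptions W pa p0 hff h0f hf0 N lam pmax :=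
    ⟨hW, hpa, hp0, hhff, hh0f, hhf0, hN, hlam, hpmax⟩
  have hbox : ∀ q : Fin K → ℝ, q ∈ Icc 0 pmax ↔ ∀ i, q i ∈ Icc 0 (pmax i) := fun q => by
    simp [← pi_univ_Icc]
  let F : (Fin K → ℝ) → Fin K → ℝ := fun q k =>
    Classical.epsilon (IsBestResponse W pa p0 hff h0f hf0 N lam pmax k q)
  have hF : ∀ q ∈ Icc 0 pmax, ∀ k, IsBestResponse W pa p0 hff h0f hf0 N lam pmax k q (F q k) :=
    fun q hq k => Classical.epsilon_spec (exists_isBestResponse hA hprice ((hbox q).1 hq) k)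
  obtain ⟨p, hp, hFp⟩ := exists_isFixedPt_of_mapsTo_of_monotoneOn
    (fun i => (hpmax i).le : 0 ≤ pmax) (fun q hq => (hbox _).2 fun k => (hF q hq k).1)
    fun q hq q' hq' hqq' k =>
      (hF q hq k).mono hA hprice hcond ((hbox q).1 hq) ((hbox q').1 hq') hqq' (hF q' hq' k)
  have hpNE : IsNashEquilibrium W pa p0 hff h0f hf0 N lam pmax p :=
    isNashEquilibrium_iff.2 fun k => by simpa [congrFun hFp.eq k] using hF p hp k
  show ∃! p, IsNashEquilibrium W pa p0 hff h0f hf0 N lam pmax p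
  exact ⟨p, hpNE, fun q hq => le_antisymm (hq.le_of_isNashEquilibrium hA hprice hcond hpNE)
    (hpNE.le_of_isNashEquilibrium hA hprice hcond hq)⟩

/-- Theorem 2: under the price condition (i) and the SINR-type condition (ii) on best
responses, the follower game has a unique (pure-strategy) Nash equilibrium. -/
theorem followerGame_unique_NE {K : ℕ} (hK : 1 ≤ K)
    (W pa p0 : ℝ) (hW : 0 < W) (hpa : 0 < pa) (hp0 : 0 ≤ p0)
    (hff : Fin K → Fin K → ℝ) (h0f hf0 N lam pmax : Fin K → ℝ)
    (hhff : ∀ i j, 0 < hff i j) (hh0f : ∀ i, 0 < h0f i) (hhf0 : ∀ i, 0 < hf0 i)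
    (hN : ∀ i, 0 < N i) (hlam : ∀ i, 0 ≤ lam i) (hpmax : ∀ i, 0 < pmax i)
    (hprice : ∀ (k : Fin K) (q : Fin K → ℝ), (∀ i, q i ∈ Set.Icc (0:ℝ) (pmax i)) →
      lam k * hf0 k < W * Gk hff h0f N p0 k q / pa)
    (hcond : ∀ (k : Fin K) (q : Fin K → ℝ), (∀ i, q i ∈ Set.Icc (0:ℝ) (pmax i)) →
      ∀ b : ℝ, IsBestResponse W pa p0 hff h0f hf0 N lam pmax k q b →
        pa * (N k + h0f k * p0 + hff k k * b + ∑ j ∈ Finset.univ.erase k, hff j k * q j) ≤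
          hff k k * b ^ 2) :
    ∃! p : Fin K → ℝ, (∀ k, p k ∈ Set.Icc (0:ℝ) (pmax k)) ∧
      ∀ k : Fin K, ∀ x ∈ Set.Icc (0:ℝ) (pmax k),
        payoff W pa p0 hff h0f hf0 N lam k (Function.update p k x) ≤
          payoff W pa p0 hff h0f hf0 N lam k p :=
  followerGame_unique_NE_general W pa p0 hW hpa hp0 hff h0f hf0 N lam pmax hhff hh0f hhf0 hN hlam
    hpmax hprice hcond
end
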